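/- arXiv:1602.06567 — 2 statements merged into one kernel-verified Lean document; each statement's English description precedes it below -/
import Mathlib

section
/- Let v, w ∈ ℝ² be linearly independent with det(v, w) = 1, and let K₁ ⊆ ℝ² be a compact convex set with 0, v, w ∈ K₁ and K₁ ⊆ conv{0, v, w, v + w}. For λ ∈ [0,1] set z_λ := (1−λ)·w − λ·v and s(λ) := sup_{x ∈ K₁} |det(x, z_λ)|, and set K₂ := {α · z_λ : λ ∈ [0,1], 0 ≤ α ≤ 1/s(λ)}. Then the set K := K₁ ∪ K₂ ∪ (−K₁) ∪ (−K₂) is convex. (Its boundary is the Radon curve γ = γ₁ ∪ γ₂ ∪ (−γ₁) ∪ (−γ₂), so every Radon curve is the boundary of a convex body.) -/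
/-!
Write `a x = det2 x w` and `b x = det2 v x`, so that `x = a x • v + b x • w` and
`det2 y x = a y * b x - b y * a x`. Then `K₁` lies in the square `0 ≤ a, b ≤ 1`, and `K₂` is the
set of points of the quadrant `a ≤ 0 ≤ b` with `det2 y x ≤ 1` for all `y ∈ K₁`. Consequently
`|det2 y p| ≤ 1` for `y ∈ K₁` and `p ∈ K`, and since these are half-plane conditions, a chord of
`K` meets the quadrant `a ≤ 0 ≤ b` inside `K₂`. If a point `x` of a chord `[p, q]` lies in the
quadrant `a, b ≥ 0`, then `[p, x]` and `[x, q]` enter that quadrant through the sides `[0, v]` and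
`[0, w]` of `K₁` (intermediate value theorem for `min a b`), so `x` lies between two points of
`K₁`. The remaining quadrants follow by the symmetry `K = -K`.
-/

/-- The standard determinant form on ℝ². -/
def det2 (x y : ℝ × ℝ) : ℝ := x.1 * y.2 - x.2 * y.1

open Set

section Det2

variable (x y z : ℝ × ℝ) (c : ℝ)

@[simp] lemma det2_add_left : det2 (x + y) z = det2 x z + det2 y z := by simp [det2]; ring
@[simp] lemma det2_add_right : det2 x (y + z) = det2 x y + det2 x z := by simp [det2]; ring
@[simp] lemma det2_sub_left : det2 (x - y) z = det2 x z - det2 y z := by simp [det2]; ring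
@[simp] lemma det2_sub_right : det2 x (y - z) = det2 x y - det2 x z := by simp [det2]; ring
@[simp] lemma det2_smul_left : det2 (c • x) y = c * det2 x y := by simp [det2]; ring
@[simp] lemma det2_smul_right : det2 x (c • y) = c * det2 x y := by simp [det2]; ring
@[simp] lemma det2_neg_left : det2 (-x) y = -det2 x y := by simp [det2]; ring
@[simp] lemma det2_neg_right : det2 x (-y) = -det2 x y := by simp [det2]; ring
@[simp] lemma det2_zero_left : det2 0 x = 0 := by simp [det2]
@[simp] lemma det2_zero_right : det2 x 0 = 0 := by simp [det2]
@[simp] lemma det2_self : det2 x x = 0 := by simp [det2]; ring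

lemma det2_swap : det2 y x = -det2 x y := by simp [det2]; ring

lemma isLinearMap_det2_left : IsLinearMap ℝ (fun x => det2 x y) :=
  ⟨fun _ _ => det2_add_left _ _ _, fun _ _ => det2_smul_left _ _ _⟩

lemma isLinearMap_det2_right : IsLinearMap ℝ (det2 x) :=
  ⟨det2_add_right x, fun c y => det2_smul_right x y c⟩

end Det2

section

variable {v w : ℝ × ℝ}

lemma eq_det2_smul_add_det2_smul (hdet : det2 v w = 1) (x : ℝ × ℝ) :
    x = det2 x w • v + det2 v x • w := by
  have : v.1 * w.2 - v.2 * w.1 = 1 := hdet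
  ext <;> simp only [det2, Prod.fst_add, Prod.snd_add, Prod.smul_fst, Prod.smul_snd, smul_eq_mul]
  · linear_combination (-x.1) * this
  · linear_combination (-x.2) * this

lemma det2_eq_sub_mul (hdet : det2 v w = 1) (x y : ℝ × ℝ) :
    det2 x y = det2 x w * det2 v y - det2 v x * det2 y w := by
  have : v.1 * w.2 - v.2 * w.1 = 1 := hdet
  simp only [det2]
  linear_combination (y.1 * x.2 - x.1 * y.2) * this

def parallelogram (v w : ℝ × ℝ) : Set (ℝ × ℝ) :=
  {x | det2 x w ∈ Icc 0 1 ∧ det2 v x ∈ Icc 0 1}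

lemma convex_parallelogram : Convex ℝ (parallelogram v w) :=
  ((convex_Icc 0 1).is_linear_preimage (isLinearMap_det2_left w)).inter
    ((convex_Icc 0 1).is_linear_preimage (isLinearMap_det2_right v))

lemma convexHull_subset_parallelogram (hdet : det2 v w = 1) :
    convexHull ℝ {0, v, w, v + w} ⊆ parallelogram v w := by
  refine convexHull_min ?_ convex_parallelogram
  simp [insert_subset_iff, parallelogram, hdet]

lemma abs_det2_le_one_of_mem_parallelogram (hdet : det2 v w = 1) {x y : ℝ × ℝ}
    (hx : x ∈ parallelogram v w) (hy : y ∈ parallelogram v w) : |det2 x y| ≤ 1 := by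
  obtain ⟨⟨hx₁, hx₂⟩, hx₃, hx₄⟩ := hx
  obtain ⟨⟨hy₁, hy₂⟩, hy₃, hy₄⟩ := hy
  rw [det2_eq_sub_mul hdet, abs_le]
  constructor <;> nlinarith [mul_nonneg hx₁ hy₃, mul_nonneg hx₃ hy₁,
    mul_le_one₀ hx₂ hy₃ hy₄, mul_le_one₀ hx₄ hy₁ hy₂]

def radonDir (v w : ℝ × ℝ) (l : ℝ) : ℝ × ℝ := (1 - l) • w - l • v

def radonCap (v w : ℝ × ℝ) (K : Set (ℝ × ℝ)) : Set (ℝ × ℝ) :=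
  {x | det2 x w ≤ 0 ∧ 0 ≤ det2 v x ∧ ∀ y ∈ K, det2 y x ≤ 1}

lemma exists_eq_smul_of_det2_nonpos (hdet : det2 v w = 1) {p : ℝ × ℝ} (ha : det2 p w ≤ 0)
    (hb : 0 ≤ det2 v p) : ∃ l ∈ Icc (0 : ℝ) 1, ∃ α : ℝ, 0 ≤ α ∧ p = α • radonDir v w l := by
  rcases (sub_nonneg.2 (ha.trans hb)).eq_or_lt with hc | hc
  · refine ⟨0, left_mem_Icc.2 zero_le_one, 0, le_rfl, ?_⟩
    rw [eq_det2_smul_add_det2_smul hdet p]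
    have : det2 p w = 0 := by linarith
    simp [this, show det2 v p = 0 by linarith]
  · refine ⟨-det2 p w / (det2 v p - det2 p w), ⟨div_nonneg (by linarith) hc.le, ?_⟩,
      det2 v p - det2 p w, hc.le, ?_⟩
    · rw [div_le_one hc]; linarith
    · conv_lhs => rw [eq_det2_smul_add_det2_smul hdet p]
      rw [radonDir]
      match_scalars
      · field_simp
      · field_simp; ring

lemma mul_csSup_le_one_iff {S : Set ℝ} (hne : S.Nonempty) (hbdd : BddAbove S) {α : ℝ}
    (hα : 0 ≤ α) : α * sSup S ≤ 1 ↔ ∀ x ∈ S, α * x ≤ 1 := by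
  refine ⟨fun h x hx => (mul_le_mul_of_nonneg_left (le_csSup hbdd hx) hα).trans h, fun h => ?_⟩
  rcases hα.eq_or_lt with rfl | hα
  · simp
  · rw [← le_div_iff₀' hα]
    exact csSup_le hne fun x hx => (le_div_iff₀' hα).2 (h x hx)

lemma det2_radonDir_mem_Icc {y : ℝ × ℝ} (hy : y ∈ parallelogram v w)
    {l : ℝ} (hl : l ∈ Icc (0 : ℝ) 1) : det2 y (radonDir v w l) ∈ Icc 0 1 := by
  obtain ⟨⟨hy₁, hy₂⟩, hy₃, hy₄⟩ := hy
  obtain ⟨hl₀, hl₁⟩ := hl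
  simp only [radonDir, det2_sub_right, det2_smul_right, det2_swap v y, mem_Icc]
  constructor <;> nlinarith

lemma le_inv_sSup_abs_det2_radonDir_iff (hdet : det2 v w = 1) {K : Set (ℝ × ℝ)}
    (hK : K ⊆ parallelogram v w) (hv : v ∈ K) (hw : w ∈ K) {l : ℝ} (hl : l ∈ Icc (0 : ℝ) 1)
    {α : ℝ} (hα : 0 ≤ α) :
    α ≤ (sSup ((fun x => |det2 x (radonDir v w l)|) '' K))⁻¹ ↔
      ∀ y ∈ K, det2 y (α • radonDir v w l) ≤ 1 := by
  set d := radonDir v w l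
  have hd : ∀ y ∈ K, |det2 y d| = det2 y d := fun y hy =>
    abs_of_nonneg (det2_radonDir_mem_Icc (hK hy) hl).1
  have hbdd : BddAbove ((fun x => |det2 x d|) '' K) := ⟨1, forall_mem_image.2 fun y hy => by
    simpa only [hd y hy] using (det2_radonDir_mem_Icc (hK hy) hl).2⟩
  have hdv : |det2 v d| = 1 - l := by rw [hd v hv]; simp [d, radonDir, hdet]
  have hdw : |det2 w d| = l := by rw [hd w hw]; simp [d, radonDir, det2_swap v w, hdet]
  have hpos : 0 < sSup ((fun x => |det2 x d|) '' K) := by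
    have := le_csSup hbdd (mem_image_of_mem _ hv)
    have := le_csSup hbdd (mem_image_of_mem _ hw)
    simp only [hdv, hdw] at *
    linarith
  rw [inv_eq_one_div, le_div_iff₀ hpos,
    mul_csSup_le_one_iff ((nonempty_of_mem hv).image _) hbdd hα, forall_mem_image]
  exact forall₂_congr fun y hy => by rw [hd y hy, det2_smul_right]

lemma setOf_smul_radonDir_eq_radonCap (hdet : det2 v w = 1) {K : Set (ℝ × ℝ)}
    (hK : K ⊆ parallelogram v w) (hv : v ∈ K) (hw : w ∈ K) :
    {p | ∃ l ∈ Icc (0 : ℝ) 1, ∃ α : ℝ, 0 ≤ α ∧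
      α ≤ (sSup ((fun x => |det2 x (radonDir v w l)|) '' K))⁻¹ ∧
      p = α • radonDir v w l} = radonCap v w K := by
  ext p
  constructor
  · rintro ⟨l, hl, α, hα, hαs, rfl⟩
    refine ⟨?_, ?_, (le_inv_sSup_abs_det2_radonDir_iff hdet hK hv hw hl hα).1 hαs⟩ <;>
      simp [radonDir, hdet] <;> nlinarith [hl.1, hl.2]
  · rintro ⟨ha, hb, hpK⟩
    obtain ⟨l, hl, α, hα, rfl⟩ := exists_eq_smul_of_det2_nonpos hdet ha hb
    exact ⟨l, hl, α, hα, (le_inv_sSup_abs_det2_radonDir_iff hdet hK hv hw hl hα).2 hpK, rfl⟩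

lemma Convex.mem_of_mem_segment_of_mem_segment {E : Type*} [AddCommGroup E] [Module ℝ E]
    {C : Set E} (hC : Convex ℝ C) {p q x p' q' : E} (hx : x ∈ segment ℝ p q)
    (hp' : p' ∈ segment ℝ p x) (hq' : q' ∈ segment ℝ x q) (hp'C : p' ∈ C) (hq'C : q' ∈ C) :
    x ∈ C := by
  rw [mem_segment_iff_wbtw] at hx hp' hq'
  exact hC.segment_subset hp'C hq'C ((hx.trans_left_right hp').trans_right_left hq').mem_segment

def radonBody (v w : ℝ × ℝ) (K : Set (ℝ × ℝ)) : Set (ℝ × ℝ) :=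
  K ∪ radonCap v w K ∪ -K ∪ -radonCap v w K

variable {K : Set (ℝ × ℝ)} {p q x : ℝ × ℝ}

lemma neg_mem_radonBody (hp : p ∈ radonBody v w K) : -p ∈ radonBody v w K := by
  simp only [radonBody, mem_union, mem_neg, neg_neg] at hp ⊢
  tauto

lemma abs_det2_le_one_of_mem_radonBody (hdet : det2 v w = 1) (hK : K ⊆ parallelogram v w)
    {y : ℝ × ℝ} (hy : y ∈ K) (hp : p ∈ radonBody v w K) : |det2 y p| ≤ 1 := by
  obtain ⟨⟨hy₁, -⟩, hy₃, -⟩ := hK hy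
  have hcap : ∀ {q}, q ∈ radonCap v w K → |det2 y q| ≤ 1 := fun ⟨ha, hb, hq⟩ =>
    abs_le.2 ⟨by rw [det2_eq_sub_mul hdet]; nlinarith [mul_nonneg hy₁ hb], hq y hy⟩
  rcases hp with ((hp | hp) | hp) | hp
  · exact abs_det2_le_one_of_mem_parallelogram hdet (hK hy) (hK hp)
  · exact hcap hp
  · simpa using abs_det2_le_one_of_mem_parallelogram hdet (hK hy) (hK hp)
  · simpa using hcap hp

lemma det2_le_one_of_mem_radonBody (hdet : det2 v w = 1) (hK : K ⊆ parallelogram v w)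
    (hv : v ∈ K) (hw : w ∈ K) (hp : p ∈ radonBody v w K) : det2 p w ≤ 1 ∧ det2 v p ≤ 1 :=
  ⟨by simpa [det2_swap p w] using
      neg_le_of_abs_le (abs_det2_le_one_of_mem_radonBody hdet hK hw hp),
    le_of_abs_le (abs_det2_le_one_of_mem_radonBody hdet hK hv hp)⟩

lemma convex_det2_le_one : Convex ℝ {x | det2 x w ≤ 1 ∧ det2 v x ≤ 1} :=
  (convex_halfSpace_le (isLinearMap_det2_left w) 1).inter
    (convex_halfSpace_le (isLinearMap_det2_right v) 1)

lemma exists_mem_segment_mem_of_min_nonpos (hdet : det2 v w = 1) (hKc : Convex ℝ K)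
    (h0 : 0 ∈ K) (hv : v ∈ K) (hw : w ∈ K) (hp : det2 p w ≤ 1 ∧ det2 v p ≤ 1)
    (hpmin : min (det2 p w) (det2 v p) ≤ 0) (hx : x ∈ parallelogram v w) :
    ∃ y ∈ segment ℝ p x, y ∈ K := by
  have hf : Continuous fun y : ℝ × ℝ => min (det2 y w) (det2 v y) := by
    simp only [det2]; fun_prop
  obtain ⟨y, hy, hfy⟩ := (convex_segment p x).isPreconnected.intermediate_value
    (left_mem_segment ℝ p x) (right_mem_segment ℝ p x) hf.continuousOn
    ⟨hpmin, le_min hx.1.1 hx.2.1⟩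
  obtain ⟨hya, hyb⟩ : det2 y w ≤ 1 ∧ det2 v y ≤ 1 :=
    convex_det2_le_one.segment_subset hp ⟨hx.1.2, hx.2.2⟩ hy
  refine ⟨y, hy, ?_⟩
  rw [eq_det2_smul_add_det2_smul hdet y]
  rcases min_eq_iff.1 hfy with ⟨ha, hab⟩ | ⟨hb, hba⟩
  · rw [ha, zero_smul, zero_add]
    exact hKc.smul_mem_of_zero_mem h0 hw ⟨ha ▸ hab, hyb⟩
  · rw [hb, zero_smul, add_zero]
    exact hKc.smul_mem_of_zero_mem h0 hv ⟨hb ▸ hba, hya⟩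

lemma exists_mem_segment_mem_of_mem_radonBody (hdet : det2 v w = 1) (hKc : Convex ℝ K)
    (hK : K ⊆ parallelogram v w) (h0 : 0 ∈ K) (hv : v ∈ K) (hw : w ∈ K)
    (hp : p ∈ radonBody v w K) (hx : x ∈ parallelogram v w) : ∃ y ∈ segment ℝ p x, y ∈ K := by
  have hmin : p ∈ K ∨ min (det2 p w) (det2 v p) ≤ 0 := by
    rcases hp with ((hp | ⟨ha, -⟩) | hp) | ⟨-, hb, -⟩
    · exact .inl hp
    · exact .inr (min_le_of_left_le ha)
    · exact .inr (min_le_of_left_le (by simpa using (hK hp).1.1))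
    · exact .inr (min_le_of_right_le (by simpa using hb))
  rcases hmin with hpK | hmin
  · exact ⟨p, left_mem_segment ℝ p x, hpK⟩
  · exact exists_mem_segment_mem_of_min_nonpos hdet hKc h0 hv hw
      (det2_le_one_of_mem_radonBody hdet hK hv hw hp) hmin hx

lemma mem_union_radonCap_of_mem_segment (hdet : det2 v w = 1) (hKc : Convex ℝ K)
    (hK : K ⊆ parallelogram v w) (h0 : 0 ∈ K) (hv : v ∈ K) (hw : w ∈ K)
    (hp : p ∈ radonBody v w K) (hq : q ∈ radonBody v w K) (hx : x ∈ segment ℝ p q)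
    (hb : 0 ≤ det2 v x) : x ∈ K ∪ radonCap v w K := by
  rcases le_total 0 (det2 x w) with ha | ha
  · obtain ⟨hxa, hxb⟩ := convex_det2_le_one.segment_subset
      (det2_le_one_of_mem_radonBody hdet hK hv hw hp)
      (det2_le_one_of_mem_radonBody hdet hK hv hw hq) hx
    have hxP : x ∈ parallelogram v w := ⟨⟨ha, hxa⟩, hb, hxb⟩
    obtain ⟨p', hp', hp'K⟩ := exists_mem_segment_mem_of_mem_radonBody hdet hKc hK h0 hv hw hp hxP
    obtain ⟨q', hq', hq'K⟩ := exists_mem_segment_mem_of_mem_radonBody hdet hKc hK h0 hv hw hq hxP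
    rw [segment_symm] at hq'
    exact .inl (hKc.mem_of_mem_segment_of_mem_segment hx hp' hq' hp'K hq'K)
  · refine .inr ⟨ha, hb, fun y hy => ?_⟩
    exact (convex_halfSpace_le (isLinearMap_det2_right y) 1).segment_subset
      (le_of_abs_le (abs_det2_le_one_of_mem_radonBody hdet hK hy hp))
      (le_of_abs_le (abs_det2_le_one_of_mem_radonBody hdet hK hy hq)) hx

lemma convex_radonBody (hdet : det2 v w = 1) (hKc : Convex ℝ K) (hK : K ⊆ parallelogram v w)
    (h0 : 0 ∈ K) (hv : v ∈ K) (hw : w ∈ K) : Convex ℝ (radonBody v w K) := by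
  intro p hp q hq a b ha hb hab
  rcases le_total 0 (det2 v (a • p + b • q)) with hx | hx
  · have := mem_union_radonCap_of_mem_segment hdet hKc hK h0 hv hw hp hq
      ⟨a, b, ha, hb, hab, rfl⟩ hx
    exact .inl (.inl this)
  · have hx' : -(a • p + b • q) ∈ segment ℝ (-p) (-q) :=
      ⟨a, b, ha, hb, hab, by simp only [smul_neg, neg_add]⟩
    have := mem_union_radonCap_of_mem_segment hdet hKc hK h0 hv hw
      (neg_mem_radonBody hp) (neg_mem_radonBody hq) hx' (by rw [det2_neg_right]; linarith)
    rcases this with h | h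
    · exact .inl (.inr h)
    · exact .inr h

end

theorem stmt_7_general (v w : ℝ × ℝ)
    (hdet : det2 v w = 1)
    (K₁ : Set (ℝ × ℝ)) (hK₁conv : Convex ℝ K₁)
    (h0 : (0 : ℝ × ℝ) ∈ K₁) (hvK : v ∈ K₁) (hwK : w ∈ K₁)
    (hK₁sub : K₁ ⊆ convexHull ℝ {0, v, w, v + w})
    (z : ℝ → ℝ × ℝ) (hz : ∀ l : ℝ, z l = (1 - l) • w - l • v)
    (s : ℝ → ℝ) (hs : ∀ l : ℝ, s l = sSup ((fun x => |det2 x (z l)|) '' K₁))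
    (K₂ : Set (ℝ × ℝ))
    (hK₂ : K₂ = {p | ∃ l ∈ Set.Icc (0 : ℝ) 1, ∃ α : ℝ,
      0 ≤ α ∧ α ≤ (s l)⁻¹ ∧ p = α • z l}) :
    Convex ℝ (K₁ ∪ K₂ ∪ (-K₁) ∪ (-K₂)) := by
  have hK : K₁ ⊆ parallelogram v w := hK₁sub.trans (convexHull_subset_parallelogram hdet)
  obtain rfl : z = radonDir v w := funext hz
  simp_rw [hs] at hK₂
  rw [hK₂, setOf_smul_radonDir_eq_radonCap hdet hK hvK hwK]
  exact convex_radonBody hdet hK₁conv hK h0 hvK hwK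

/-- The region enclosed by a Radon curve, namely `K₁ ∪ K₂ ∪ (−K₁) ∪ (−K₂)`,
is convex; hence every Radon curve bounds a convex body. -/
theorem stmt_7 (v w : ℝ × ℝ) (hind : LinearIndependent ℝ ![v, w])
    (hdet : det2 v w = 1)
    (K₁ : Set (ℝ × ℝ)) (hK₁c : IsCompact K₁) (hK₁conv : Convex ℝ K₁)
    (h0 : (0 : ℝ × ℝ) ∈ K₁) (hvK : v ∈ K₁) (hwK : w ∈ K₁)
    (hK₁sub : K₁ ⊆ convexHull ℝ {0, v, w, v + w})
    (z : ℝ → ℝ × ℝ) (hz : ∀ l : ℝ, z l = (1 - l) • w - l • v)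
    (s : ℝ → ℝ) (hs : ∀ l : ℝ, s l = sSup ((fun x => |det2 x (z l)|) '' K₁))
    (K₂ : Set (ℝ × ℝ))
    (hK₂ : K₂ = {p | ∃ l ∈ Set.Icc (0 : ℝ) 1, ∃ α : ℝ,
      0 ≤ α ∧ α ≤ (s l)⁻¹ ∧ p = α • z l}) :
    Convex ℝ (K₁ ∪ K₂ ∪ (-K₁) ∪ (-K₂)) :=
  stmt_7_general v w hdet K₁ hK₁conv h0 hvK hwK hK₁sub z hz s hs K₂ hK₂
end

section
/- Let (E, ‖·‖) be a two-dimensional real normed space and let ω be a nonzero alternating bilinear form on E. Define the antinorm by ‖x‖ₐ := sup{|ω(y, x)| : y ∈ E, ‖y‖ = 1}. Then Birkhoff orthogonality is a symmetric relation on E (i.e., for all x, y ∈ E, x ⊣_B y implies y ⊣_B x) if and only if the unit anticircle is a homothet of the unit circle, i.e., there exists c > 0 such that {x ∈ E : ‖x‖ₐ = 1} = c • {x ∈ E : ‖x‖ = 1}. -/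
open Pointwise

/-- Birkhoff orthogonality: `x ⊣_B y` iff `‖x‖ ≤ ‖x + t • y‖` for every `t`. -/
def BirkhoffOrth {E : Type*} [NormedAddCommGroup E] [NormedSpace ℝ E]
    (x y : E) : Prop := ∀ t : ℝ, ‖x‖ ≤ ‖x + t • y‖

/-- The antinorm associated to a determinant form `ω`. -/
noncomputable def antinorm {E : Type*} [NormedAddCommGroup E] [NormedSpace ℝ E]
    (ω : E →ₗ[ℝ] E →ₗ[ℝ] ℝ) (x : E) : ℝ :=
  sSup ((fun y => |ω y x|) '' Metric.sphere (0 : E) 1)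

/-
Both directions rest on a James-type characterisation: in the plane, `x ⊣_B y` iff
`|ω x y| = ‖x‖ * antinorm ω y`. If the antinorm is a multiple of the norm, the right-hand side
is symmetric in `x` and `y`. Conversely, suppose Birkhoff orthogonality is symmetric and let
`ω z` be a norming functional of `v`; then `v ⊣_B z`, hence `z ⊣_B v`, which forces
`‖z‖ * antinorm ω v = ‖v‖`, so that `(antinorm ω v / ‖v‖) • ω z` is a norming functional of the
antinorm at `v`. Along every line avoiding the origin the convex functions `‖·‖` and
`antinorm ω` therefore have common subgradients up to the factor `q = antinorm ω / ‖·‖`, so the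
right derivative of `q` vanishes and `q` is constant.
-/

open Set Filter Topology

lemma convexOn_univ_of_forall_exists_le {f : ℝ → ℝ}
    (h : ∀ s, ∃ c, ∀ s', f s + c * (s' - s) ≤ f s') : ConvexOn ℝ univ f := by
  refine ⟨convex_univ, fun x _ y _ a b ha hb hab => ?_⟩
  obtain ⟨c, hc⟩ := h (a • x + b • y)
  simp only [smul_eq_mul] at hc ⊢
  have hx := mul_le_mul_of_nonneg_left (hc x) ha
  have hy := mul_le_mul_of_nonneg_left (hc y) hb
  have hb' : b = 1 - a := by linarith
  subst hb'
  nlinarith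

lemma HasDerivWithinAt.tendsto_slope_two_mul_sub {g : ℝ → ℝ} {D t : ℝ}
    (hg : HasDerivWithinAt g D (Ioi t) t) :
    Tendsto (fun s => slope g s (2 * s - t)) (𝓝[>] t) (𝓝 D) := by
  have hslope : Tendsto (slope g t) (𝓝[>] t) (𝓝 D) :=
    (hasDerivWithinAt_iff_tendsto_slope' (by simp)).1 hg
  have hdouble : Tendsto (fun s => 2 * s - t) (𝓝[>] t) (𝓝[>] t) := by
    refine tendsto_nhdsWithin_of_tendsto_nhds_of_eventually_within _ ?_ ?_
    · have h : Tendsto (fun s : ℝ => 2 * s - t) (𝓝 t) (𝓝 (2 * t - t)) :=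
        ((continuous_const.mul continuous_id).sub continuous_const).tendsto t
      rw [show 2 * t - t = t by ring] at h
      exact h.mono_left nhdsWithin_le_nhds
    · filter_upwards [self_mem_nhdsWithin] with s (hs : t < s)
      show t < 2 * s - t
      linarith
  have := ((hslope.comp hdouble).const_mul 2).sub hslope
  rw [show 2 * D - D = D by ring] at this
  refine this.congr' ?_
  filter_upwards [self_mem_nhdsWithin] with s (hs : t < s)
  have hd : s - t ≠ 0 := sub_ne_zero.2 hs.ne'
  simp only [Function.comp, slope_def_field, show 2 * s - t - t = 2 * (s - t) by ring,
    show 2 * s - t - s = s - t by ring]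
  field_simp
  ring

lemma eq_mul_of_common_subgradient {f n q : ℝ → ℝ} {t Df Dn : ℝ}
    (hf : HasDerivWithinAt f Df (Ioi t) t) (hn : HasDerivWithinAt n Dn (Ioi t) t)
    (hq : ContinuousWithinAt q (Ioi t) t) (hq0 : ∀ s, 0 ≤ q s)
    (hsub : ∀ s, ∃ c, ∀ s', f s + c * (s' - s) ≤ f s' ∧ n s + q s * c * (s' - s) ≤ n s') :
    Dn = q t * Df := by
  -- a common subgradient at `s` lies between the slopes on `[t, s]` and on `[s, 2s - t]`
  have bounds : ∀ s, t < s →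
      q s * slope f t s ≤ slope n s (2 * s - t) ∧ slope n t s ≤ q s * slope f s (2 * s - t) := by
    intro s hs
    obtain ⟨c, hc⟩ := hsub s
    have hd : 0 < s - t := sub_pos.2 hs
    obtain ⟨hf₁, hn₁⟩ := hc t
    obtain ⟨hf₂, hn₂⟩ := hc (2 * s - t)
    simp only [slope_def_field, show 2 * s - t - s = s - t by ring]
    have hcf₁ : (f s - f t) / (s - t) ≤ c := by rw [div_le_iff₀ hd]; linarith
    have hcf₂ : c ≤ (f (2 * s - t) - f s) / (s - t) := by rw [le_div_iff₀ hd]; linarith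
    constructor
    · calc q s * ((f s - f t) / (s - t)) ≤ q s * c := mul_le_mul_of_nonneg_left hcf₁ (hq0 s)
        _ ≤ _ := by rw [le_div_iff₀ hd]; linarith
    · calc (n s - n t) / (s - t) ≤ q s * c := by rw [div_le_iff₀ hd]; linarith
        _ ≤ _ := mul_le_mul_of_nonneg_left hcf₂ (hq0 s)
  have hf' : Tendsto (slope f t) (𝓝[>] t) (𝓝 Df) :=
    (hasDerivWithinAt_iff_tendsto_slope' (by simp)).1 hf
  have hn' : Tendsto (slope n t) (𝓝[>] t) (𝓝 Dn) :=
    (hasDerivWithinAt_iff_tendsto_slope' (by simp)).1 hn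
  have hle : q t * Df ≤ Dn :=
    le_of_tendsto_of_tendsto (hq.tendsto.mul hf') hn.tendsto_slope_two_mul_sub
      (eventually_nhdsWithin_of_forall fun s hs => (bounds s hs).1)
  have hge : Dn ≤ q t * Df :=
    le_of_tendsto_of_tendsto hn' (hq.tendsto.mul hf.tendsto_slope_two_mul_sub)
      (eventually_nhdsWithin_of_forall fun s hs => (bounds s hs).2)
  exact le_antisymm hge hle

lemma div_eq_div_of_common_subgradient {f n : ℝ → ℝ} (hf : ∀ s, 0 < f s) (hn : ∀ s, 0 ≤ n s)
    (hsub : ∀ s, ∃ c, ∀ s',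
      f s + c * (s' - s) ≤ f s' ∧ n s + n s / f s * c * (s' - s) ≤ n s')
    (a b : ℝ) : n a / f a = n b / f b := by
  have hfc : ConvexOn ℝ univ f :=
    convexOn_univ_of_forall_exists_le fun s => (hsub s).imp fun c hc s' => (hc s').1
  have hnc : ConvexOn ℝ univ n := convexOn_univ_of_forall_exists_le fun s =>
    let ⟨c, hc⟩ := hsub s; ⟨n s / f s * c, fun s' => (hc s').2⟩
  have hf_cont : Continuous f := by
    simpa [continuousOn_univ] using hfc.continuousOn_interior
  have hn_cont : Continuous n := by
    simpa [continuousOn_univ] using hnc.continuousOn_interior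
  have hderiv : ∀ t, HasDerivWithinAt (fun s => n s / f s) 0 (Ici t) t := by
    intro t
    have hf' := hfc.hasDerivWithinAt_rightDeriv_of_mem_interior (by simp : t ∈ interior univ)
    have hn' := hnc.hasDerivWithinAt_rightDeriv_of_mem_interior (by simp : t ∈ interior univ)
    have hrel := eq_mul_of_common_subgradient hf' hn'
      ((hn_cont.div hf_cont fun s => (hf s).ne').continuousWithinAt)
      (fun s => div_nonneg (hn s) (hf s).le) hsub
    rw [← hasDerivWithinAt_Ioi_iff_Ici]
    refine (hn'.div hf' (hf t).ne').congr_deriv ?_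
    have := (hf t).ne'
    rw [hrel, Pi.div_apply]
    field_simp
    ring
  have hconst : ∀ {a b : ℝ}, a ≤ b → n b / f b = n a / f a := fun hab =>
    constant_of_has_deriv_right_zero (hn_cont.div hf_cont fun s => (hf s).ne').continuousOn
      (fun t _ => hderiv t) _ ⟨hab, le_rfl⟩
  rcases le_total a b with hab | hba
  · exact (hconst hab).symm
  · exact hconst hba

section

variable {E : Type*} [NormedAddCommGroup E] [NormedSpace ℝ E]

lemma setOf_eq_one_eq_smul_sphere_iff {p : E → ℝ} (hp : ∀ (a : ℝ) x, p (a • x) = |a| * p x)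
    (hpos : ∀ x, x ≠ 0 → 0 < p x) {c : ℝ} (hc : 0 < c) :
    {x | p x = 1} = c • {x : E | ‖x‖ = 1} ↔ ∀ x, c * p x = ‖x‖ := by
  constructor
  · intro h x
    rcases eq_or_ne x 0 with rfl | hx
    · simp [show p 0 = 0 by simpa using hp 0 0]
    have hpx := hpos x hx
    have hmem : (p x)⁻¹ • x ∈ c • {x : E | ‖x‖ = 1} := by
      rw [← h, mem_ofPred_eq, hp, abs_of_pos (inv_pos.2 hpx), inv_mul_cancel₀ hpx.ne']
    rw [mem_smul_set_iff_inv_smul_mem₀ hc.ne', mem_ofPred_eq, smul_smul, norm_smul,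
      Real.norm_eq_abs, abs_of_pos (by positivity)] at hmem
    field_simp at hmem
    linarith
  · intro h
    ext x
    rw [mem_smul_set_iff_inv_smul_mem₀ hc.ne', mem_ofPred_eq, mem_ofPred_eq, norm_smul, ← h,
      norm_inv, Real.norm_eq_abs, abs_of_pos hc, inv_mul_cancel_left₀ hc.ne']

namespace BirkhoffOrth

lemma mul_norm_le {x y : E} (h : BirkhoffOrth x y) (a b : ℝ) :
    |a| * ‖x‖ ≤ ‖a • x + b • y‖ := by
  rcases eq_or_ne a 0 with rfl | ha
  · simp
  calc |a| * ‖x‖ ≤ |a| * ‖x + (b / a) • y‖ := by gcongr; exact h _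
    _ = ‖a • x + b • y‖ := by
      rw [← Real.norm_eq_abs, ← norm_smul, smul_add, smul_smul, mul_div_cancel₀ _ ha]

lemma linearIndependent {x y : E} (h : BirkhoffOrth x y) (hx : x ≠ 0) (hy : y ≠ 0) :
    LinearIndependent ℝ ![x, y] := by
  rw [LinearIndependent.pair_iff]
  intro a b hab
  have ha : a = 0 := by
    have := h.mul_norm_le a b
    rw [hab, norm_zero] at this
    exact abs_eq_zero.1 (le_antisymm (nonpos_of_mul_nonpos_left this (norm_pos_iff.2 hx))
      (abs_nonneg a))
  subst ha
  rw [zero_smul, zero_add, smul_eq_zero] at hab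
  exact ⟨rfl, hab.resolve_right hy⟩

end BirkhoffOrth

lemma birkhoffOrth_of_apply_eq_norm {g : E →ₗ[ℝ] ℝ} (hg : ∀ u, g u ≤ ‖u‖) {x y : E}
    (hx : g x = ‖x‖) (hy : g y = 0) : BirkhoffOrth x y := fun t => by
  simpa [hx, hy] using hg (x + t • y)

lemma linearIndependent_of_apply_ne_zero {ω : E →ₗ[ℝ] E →ₗ[ℝ] ℝ} (halt : ω.IsAlt) {a b : E}
    (h : ω a b ≠ 0) : LinearIndependent ℝ ![a, b] := by
  rw [LinearIndependent.pair_iff]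
  intro s t hst
  have hb : ω (s • a + t • b) b = 0 := by rw [hst]; simp
  have ha : ω a (s • a + t • b) = 0 := by rw [hst]; simp
  simp only [map_add, map_smul, LinearMap.add_apply, LinearMap.smul_apply, halt.self_eq_zero,
    smul_eq_mul, mul_zero, add_zero, zero_add] at ha hb
  exact ⟨(mul_eq_zero.1 hb).resolve_right h, (mul_eq_zero.1 ha).resolve_right h⟩

section FiniteDimensional

variable [FiniteDimensional ℝ E] {ω : E →ₗ[ℝ] E →ₗ[ℝ] ℝ}

lemma antinorm_eq_norm (x : E) :
    antinorm ω x = ‖LinearMap.toContinuousLinearMap (ω.flip x)‖ := by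
  rw [antinorm, ← ContinuousLinearMap.sSup_sphere_eq_norm]
  simp [Real.norm_eq_abs]

lemma antinorm_nonneg (x : E) : 0 ≤ antinorm ω x := by
  rw [antinorm_eq_norm]
  exact norm_nonneg _

lemma antinorm_smul (a : ℝ) (x : E) : antinorm ω (a • x) = |a| * antinorm ω x := by
  simp only [antinorm_eq_norm, map_smul, norm_smul, Real.norm_eq_abs]

lemma abs_apply_le_mul_antinorm (y x : E) : |ω y x| ≤ ‖y‖ * antinorm ω x := by
  rw [antinorm_eq_norm, mul_comm]
  exact (LinearMap.toContinuousLinearMap (ω.flip x)).le_opNorm y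

lemma antinorm_le_of_forall {x : E} {K : ℝ} (hK : 0 ≤ K) (h : ∀ y, |ω y x| ≤ K * ‖y‖) :
    antinorm ω x ≤ K := by
  rw [antinorm_eq_norm]
  exact ContinuousLinearMap.opNorm_le_bound _ hK h

lemma antinorm_pos (halt : ω.IsAlt) (hnd : ω.SeparatingLeft) {x : E} (hx : x ≠ 0) :
    0 < antinorm ω x := by
  obtain ⟨y, hy⟩ : ∃ y, ω x y ≠ 0 := by
    by_contra! h
    exact hx (hnd x h)
  have hyx : 0 < |ω y x| := by rwa [abs_pos, ← halt.neg, neg_ne_zero]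
  exact pos_of_mul_pos_right (hyx.trans_le (abs_apply_le_mul_antinorm y x)) (norm_nonneg y)

lemma exists_apply_eq_norm (hnd : ω.SeparatingLeft) {v : E} (hv : v ≠ 0) :
    ∃ z, ω z v = ‖v‖ ∧ ∀ u, ω z u ≤ ‖u‖ := by
  obtain ⟨g, hg, hgv⟩ := exists_dual_vector ℝ v (norm_ne_zero_iff.2 hv)
  have hsurj : Function.Surjective ω :=
    (LinearMap.injective_iff_surjective_of_finrank_eq_finrank Subspace.dual_finrank_eq.symm).1
      (LinearMap.ker_eq_bot.1 (LinearMap.separatingLeft_iff_ker_eq_bot.1 hnd))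
  obtain ⟨z, hz⟩ := hsurj g
  refine ⟨z, by simp [hz, hgv], fun u => ?_⟩
  rw [hz]
  calc g u ≤ ‖g u‖ := Real.le_norm_self _
    _ ≤ ‖g‖ * ‖u‖ := g.le_opNorm u
    _ = ‖u‖ := by rw [hg, one_mul]

lemma span_pair_eq_top (hdim : Module.finrank ℝ E = 2) {a b : E}
    (h : LinearIndependent ℝ ![a, b]) : Submodule.span ℝ {a, b} = ⊤ := by
  rw [← Matrix.range_cons_cons_empty a b ![]]
  exact h.span_eq_top_of_card_eq_finrank' (by simp [hdim])

lemma separatingLeft_of_finrank_eq_two (hdim : Module.finrank ℝ E = 2) (halt : ω.IsAlt)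
    (hω : ω ≠ 0) : ω.SeparatingLeft := by
  obtain ⟨a, b, hab⟩ : ∃ a b, ω a b ≠ 0 := by
    by_contra! h
    exact hω (LinearMap.ext₂ h)
  intro z hz
  have hspan := span_pair_eq_top hdim (linearIndependent_of_apply_ne_zero halt hab)
  obtain ⟨s, t, rfl⟩ := Submodule.mem_span_pair.1 (hspan ▸ Submodule.mem_top : z ∈ _)
  have hb := hz b
  have ha := hz a
  simp only [map_add, map_smul, LinearMap.add_apply, LinearMap.smul_apply, halt.self_eq_zero,
    smul_eq_mul, mul_zero, add_zero, zero_add, ← halt.neg a b, mul_neg, neg_eq_zero] at ha hb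
  rw [(mul_eq_zero.1 hb).resolve_right hab, (mul_eq_zero.1 ha).resolve_right hab]
  simp

theorem birkhoffOrth_iff_abs_apply_eq (hdim : Module.finrank ℝ E = 2) (halt : ω.IsAlt)
    (hnd : ω.SeparatingLeft) (x y : E) :
    BirkhoffOrth x y ↔ |ω x y| = ‖x‖ * antinorm ω y := by
  constructor
  · intro h
    refine le_antisymm (abs_apply_le_mul_antinorm x y) ?_
    rcases eq_or_ne x 0 with rfl | hx
    · simp
    rcases eq_or_ne y 0 with rfl | hy
    · simp [antinorm_eq_norm]
    have hspan := span_pair_eq_top hdim (h.linearIndependent hx hy)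
    have hxn := norm_pos_iff.2 hx
    suffices antinorm ω y ≤ |ω x y| / ‖x‖ by rwa [le_div_iff₀ hxn, mul_comm] at this
    refine antinorm_le_of_forall (by positivity) fun u => ?_
    obtain ⟨a, b, rfl⟩ := Submodule.mem_span_pair.1 (hspan ▸ Submodule.mem_top : u ∈ _)
    have hab := h.mul_norm_le a b
    simp only [map_add, map_smul, LinearMap.add_apply, LinearMap.smul_apply, halt.self_eq_zero,
      smul_eq_mul, mul_zero, add_zero, abs_mul]
    rw [div_mul_eq_mul_div, le_div_iff₀ hxn]
    nlinarith [abs_nonneg (ω x y)]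
  · intro h t
    rcases eq_or_ne y 0 with rfl | hy
    · simp
    refine le_of_mul_le_mul_right ?_ (antinorm_pos halt hnd hy)
    calc ‖x‖ * antinorm ω y = |ω (x + t • y) y| := by simp [h, halt.self_eq_zero]
      _ ≤ ‖x + t • y‖ * antinorm ω y := abs_apply_le_mul_antinorm _ _

lemma norm_mul_antinorm_eq_of_symm (hdim : Module.finrank ℝ E = 2) (halt : ω.IsAlt)
    (hnd : ω.SeparatingLeft) (hsymm : ∀ x y : E, BirkhoffOrth x y → BirkhoffOrth y x)
    {v z : E} (hz : ∀ u, ω z u ≤ ‖u‖) (hzv : ω z v = ‖v‖) :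
    ‖z‖ * antinorm ω v = ‖v‖ := by
  have hvz : BirkhoffOrth v z := birkhoffOrth_of_apply_eq_norm hz hzv (halt.self_eq_zero z)
  have := (birkhoffOrth_iff_abs_apply_eq hdim halt hnd z v).1 (hsymm v z hvz)
  rwa [hzv, abs_of_nonneg (norm_nonneg v), eq_comm] at this

lemma exists_common_norming_of_symm (hdim : Module.finrank ℝ E = 2) (halt : ω.IsAlt)
    (hnd : ω.SeparatingLeft) (hsymm : ∀ x y : E, BirkhoffOrth x y → BirkhoffOrth y x)
    {v : E} (hv : v ≠ 0) :
    ∃ z, ω z v = ‖v‖ ∧ ∀ u, ω z u ≤ ‖u‖ ∧ antinorm ω v / ‖v‖ * ω z u ≤ antinorm ω u := by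
  obtain ⟨z, hzv, hz⟩ := exists_apply_eq_norm hnd hv
  have hzN := norm_mul_antinorm_eq_of_symm hdim halt hnd hsymm hz hzv
  refine ⟨z, hzv, fun u => ⟨hz u, ?_⟩⟩
  calc antinorm ω v / ‖v‖ * ω z u ≤ antinorm ω v / ‖v‖ * (‖z‖ * antinorm ω u) := by
        gcongr
        · exact div_nonneg (antinorm_nonneg v) (norm_nonneg v)
        · exact (le_abs_self _).trans (abs_apply_le_mul_antinorm _ _)
    _ = antinorm ω u := by
        rw [← mul_assoc, div_mul_eq_mul_div, mul_comm (antinorm ω v), hzN,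
          div_self (norm_ne_zero_iff.2 hv), one_mul]

lemma exists_common_subgradient_of_symm (hdim : Module.finrank ℝ E = 2) (halt : ω.IsAlt)
    (hnd : ω.SeparatingLeft) (hsymm : ∀ x y : E, BirkhoffOrth x y → BirkhoffOrth y x)
    {x w : E} (hne : ∀ s : ℝ, x + s • w ≠ 0) (s : ℝ) :
    ∃ c, ∀ s' : ℝ, ‖x + s • w‖ + c * (s' - s) ≤ ‖x + s' • w‖ ∧
      antinorm ω (x + s • w) + antinorm ω (x + s • w) / ‖x + s • w‖ * c * (s' - s) ≤
        antinorm ω (x + s' • w) := by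
  obtain ⟨z, hzv, hz⟩ := exists_common_norming_of_symm hdim halt hnd hsymm (hne s)
  refine ⟨ω z w, fun s' => ?_⟩
  have hline : ω z (x + s' • w) = ‖x + s • w‖ + ω z w * (s' - s) := by
    rw [← hzv, show x + s' • w = x + s • w + (s' - s) • w by module, map_add, map_smul,
      smul_eq_mul, mul_comm]
  refine ⟨hline ▸ (hz _).1, le_of_eq_of_le ?_ (hz _).2⟩
  have := norm_ne_zero_iff.2 (hne s)
  rw [hline]
  field_simp

lemma antinorm_mul_norm_eq_of_symm (hdim : Module.finrank ℝ E = 2) (halt : ω.IsAlt)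
    (hnd : ω.SeparatingLeft) (hsymm : ∀ x y : E, BirkhoffOrth x y → BirkhoffOrth y x)
    (x y : E) : antinorm ω x * ‖y‖ = antinorm ω y * ‖x‖ := by
  rcases eq_or_ne x 0 with rfl | hx
  · simp [antinorm_eq_norm]
  by_cases hxy : LinearIndependent ℝ ![x, y]
  · have hne : ∀ s : ℝ, x + s • (y - x) ≠ 0 := by
      intro s hs
      have := LinearIndependent.pair_iff.1 hxy (1 - s) s (by rw [← hs]; module)
      linarith [this.1, this.2]
    have := div_eq_div_of_common_subgradient (fun s => norm_pos_iff.2 (hne s))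
      (fun s => antinorm_nonneg _) (exists_common_subgradient_of_symm hdim halt hnd hsymm hne) 0 1
    have hy : y ≠ 0 := by rintro rfl; simpa using hne 1
    simp only [zero_smul, add_zero, one_smul, add_sub_cancel] at this
    rwa [div_eq_div_iff (norm_ne_zero_iff.2 hx) (norm_ne_zero_iff.2 hy)] at this
  · obtain ⟨a, rfl⟩ : ∃ a : ℝ, a • x = y := by
      by_contra! h
      exact hxy ((LinearIndependent.pair_iff' hx).2 h)
    rw [antinorm_smul, norm_smul, Real.norm_eq_abs]
    ring

theorem birkhoffOrth_symm_iff (hdim : Module.finrank ℝ E = 2) (halt : ω.IsAlt)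
    (hnd : ω.SeparatingLeft) :
    (∀ x y : E, BirkhoffOrth x y → BirkhoffOrth y x) ↔
      ∃ c, 0 < c ∧ ∀ x, c * antinorm ω x = ‖x‖ := by
  constructor
  · intro hsymm
    have : Nontrivial E := Module.nontrivial_of_finrank_eq_succ hdim
    obtain ⟨x₀, hx₀⟩ := exists_ne (0 : E)
    have hN₀ := antinorm_pos halt hnd hx₀
    refine ⟨‖x₀‖ / antinorm ω x₀, div_pos (norm_pos_iff.2 hx₀) hN₀, fun x => ?_⟩
    rw [div_mul_eq_mul_div, div_eq_iff hN₀.ne', mul_comm,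
      antinorm_mul_norm_eq_of_symm hdim halt hnd hsymm, mul_comm]
  · rintro ⟨c, hc, hN⟩ x y hxy
    rw [birkhoffOrth_iff_abs_apply_eq hdim halt hnd] at hxy ⊢
    refine mul_left_cancel₀ hc.ne' ?_
    rw [← halt.neg, abs_neg, hxy, ← hN, ← hN y]
    ring

end FiniteDimensional

end

/-- In a normed plane, Birkhoff orthogonality is symmetric iff the unit
anticircle is a homothet of the unit circle. -/
theorem stmt_12 {E : Type*} [NormedAddCommGroup E] [NormedSpace ℝ E]
    (hdim : Module.finrank ℝ E = 2)
    (ω : E →ₗ[ℝ] E →ₗ[ℝ] ℝ) (halt : ∀ x : E, ω x x = 0) (hω : ω ≠ 0) :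
    (∀ x y : E, BirkhoffOrth x y → BirkhoffOrth y x) ↔
      ∃ c : ℝ, 0 < c ∧
        {x : E | antinorm ω x = 1} = c • {x : E | ‖x‖ = 1} := by
  have : FiniteDimensional ℝ E := Module.finite_of_finrank_eq_succ hdim
  have hnd := separatingLeft_of_finrank_eq_two hdim halt hω
  rw [birkhoffOrth_symm_iff hdim halt hnd]
  refine exists_congr fun c => and_congr_right fun hc => ?_
  exact (setOf_eq_one_eq_smul_sphere_iff antinorm_smul (fun _ => antinorm_pos halt hnd) hc).symm
end
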